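/- Let μ_II be the probability measure on [0,1] with cumulative distribution function F(x) = x² (i.e. density 2x on [0,1]) and let ν be the uniform probability measure on [0,2π). Then for every r with 0 ≤ r ≤ 1, the measure of the set {(t₁,t₂,θ₁,θ₂) : D(t₁,t₂,θ₁,θ₂) ≤ r} with respect to μ_II ⊗ μ_II ⊗ ν ⊗ ν equals 3r⁴/8. -/

import Mathlib

open MeasureTheory Real

/-- Distance from the origin to the intersection point of the lines
`{(x,y) : x cos θᵢ + y sin θᵢ = tᵢ}`, `i = 1, 2`. -/
noncomputable def interDist (t₁ t₂ θ₁ θ₂ : ℝ) : ℝ :=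
  Real.sqrt (t₁ ^ 2 + t₂ ^ 2 - 2 * t₁ * t₂ * Real.cos (θ₂ - θ₁)) / |Real.sin (θ₂ - θ₁)|

/-- Uniform probability measure on `[0, 2π)`. -/
noncomputable def unifCircle : Measure ℝ :=
  (ENNReal.ofReal (2 * π))⁻¹ • volume.restrict (Set.Ico 0 (2 * π))

/-- The probability measure on `[0, 1]` with density `2t` (Bertrand's "uniform
midpoint" chord: the distance to the origin of a chord whose midpoint is uniform
in the unit disk). -/
noncomputable def unifMidpoint : Measure ℝ :=
  (volume.restrict (Set.Icc 0 1)).withDensity fun t => ENNReal.ofReal (2 * t)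

open scoped symmDiff

set_option maxHeartbeats 1000000



lemma measurable_interDist : Measurable fun q : ℝ × ℝ × ℝ × ℝ => interDist q.1 q.2.1 q.2.2.1 q.2.2.2 := by
  unfold interDist; fun_prop

lemma measurable_interDist2 (t₁ t₂ : ℝ) : Measurable fun p : ℝ × ℝ => interDist t₁ t₂ p.1 p.2 := by
  unfold interDist; fun_prop

lemma measurable_interDist1 (t₁ t₂ θ₁ : ℝ) : Measurable fun θ₂ : ℝ => interDist t₁ t₂ θ₁ θ₂ := by
  unfold interDist; fun_prop

-- set identity on [0, 2π]
lemma cos_set_eq (x₁ x₂ : ℝ) (h1 : -1 ≤ x₁) (h12 : x₁ ≤ x₂) (h2 : x₂ ≤ 1) :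
    {φ : ℝ | Real.cos φ ∈ Set.Icc x₁ x₂} ∩ Set.Icc 0 (2*π) =
      Set.Icc (Real.arccos x₂) (Real.arccos x₁) ∪
        Set.Icc (2*π - Real.arccos x₁) (2*π - Real.arccos x₂) := by
  have hpi := Real.pi_pos
  have ha1m : Real.arccos x₁ ∈ Set.Icc 0 π := ⟨Real.arccos_nonneg _, Real.arccos_le_pi _⟩
  have ha2m : Real.arccos x₂ ∈ Set.Icc 0 π := ⟨Real.arccos_nonneg _, Real.arccos_le_pi _⟩
  have hc1 : Real.cos (Real.arccos x₁) = x₁ := Real.cos_arccos h1 (le_trans h12 h2)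
  have hc2 : Real.cos (Real.arccos x₂) = x₂ := Real.cos_arccos (le_trans h1 h12) h2
  have key : ∀ φ ∈ Set.Icc 0 π, (Real.cos φ ∈ Set.Icc x₁ x₂ ↔
      φ ∈ Set.Icc (Real.arccos x₂) (Real.arccos x₁)) := by
    intro φ hφ
    constructor
    · rintro ⟨hl, hu⟩
      constructor
      · by_contra hlt
        push_neg at hlt
        have := Real.strictAntiOn_cos hφ ha2m hlt
        rw [hc2] at this; linarith
      · by_contra hlt
        push_neg at hlt
        have := Real.strictAntiOn_cos ha1m hφ hlt
        rw [hc1] at this; linarith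
    · rintro ⟨hl, hu⟩
      constructor
      · rw [← hc1]
        exact Real.strictAntiOn_cos.antitoneOn hφ ha1m hu
      · rw [← hc2]
        exact Real.strictAntiOn_cos.antitoneOn ha2m hφ hl
  ext φ
  simp only [Set.mem_inter_iff, Set.mem_setOf_eq, Set.mem_union]
  constructor
  · rintro ⟨hcos, h0, h2π⟩
    rcases le_total φ π with hle | hge
    · exact Or.inl ((key φ ⟨h0, hle⟩).1 hcos)
    · right
      have hmem : 2*π - φ ∈ Set.Icc 0 π := ⟨by linarith, by linarith⟩
      have hcos' : Real.cos (2*π - φ) = Real.cos φ := by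
        rw [Real.cos_sub]; simp [Real.cos_two_pi, Real.sin_two_pi]
      have := (key _ hmem).1 (by rw [hcos']; exact hcos)
      exact ⟨by linarith [this.2], by linarith [this.1]⟩
  · rintro (⟨hl, hu⟩ | ⟨hl, hu⟩)
    · have hφm : φ ∈ Set.Icc 0 π := ⟨le_trans ha2m.1 hl, le_trans hu ha1m.2⟩
      exact ⟨(key φ hφm).2 ⟨hl, hu⟩, hφm.1, by linarith [hφm.2]⟩
    · have hφm : 2*π - φ ∈ Set.Icc 0 π := ⟨by linarith [ha2m.1], by linarith [ha1m.2]⟩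
      have hcos' : Real.cos (2*π - φ) = Real.cos φ := by
        rw [Real.cos_sub]; simp [Real.cos_two_pi, Real.sin_two_pi]
      have := (key _ hφm).2 ⟨by linarith, by linarith⟩
      rw [hcos'] at this
      exact ⟨this, by linarith [ha1m.1, hφm.2], by linarith [hφm.1]⟩

lemma volume_cos_set (x₁ x₂ : ℝ) (h1 : -1 ≤ x₁) (h12 : x₁ ≤ x₂) (h2 : x₂ ≤ 1) :
    volume ({φ : ℝ | Real.cos φ ∈ Set.Icc x₁ x₂} ∩ Set.Icc 0 (2*π)) =
      ENNReal.ofReal (2 * (Real.arccos x₁ - Real.arccos x₂)) := by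
  have hpi := Real.pi_pos
  have ha12 : Real.arccos x₂ ≤ Real.arccos x₁ := by
    by_contra hlt
    push_neg at hlt
    have := Real.strictAntiOn_cos ⟨Real.arccos_nonneg _, Real.arccos_le_pi _⟩
      ⟨Real.arccos_nonneg _, Real.arccos_le_pi _⟩ hlt
    rw [Real.cos_arccos h1 (le_trans h12 h2), Real.cos_arccos (le_trans h1 h12) h2] at this
    linarith
  rw [cos_set_eq x₁ x₂ h1 h12 h2]
  have hdisj : Set.Icc (Real.arccos x₂) (Real.arccos x₁) ∩
      Set.Icc (2*π - Real.arccos x₁) (2*π - Real.arccos x₂) ⊆ {π} := by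
    rintro x ⟨⟨_, hb⟩, ⟨hc, _⟩⟩
    have h1' := Real.arccos_le_pi x₁
    simp only [Set.mem_singleton_iff]
    have h2' := Real.arccos_le_pi x₁
    linarith [Real.arccos_le_pi x₁]
  rw [measure_union₀ measurableSet_Icc.nullMeasurableSet
    (measure_mono_null hdisj (by simp) : volume _ = 0)]
  rw [Real.volume_Icc, Real.volume_Icc]
  rw [← ENNReal.ofReal_add (by linarith) (by linarith)]
  ring_nf



lemma volume_cos_window (x₁ x₂ θ₁ : ℝ) (h1 : -1 ≤ x₁) (h12 : x₁ ≤ x₂) (h2 : x₂ ≤ 1)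
    (hval : volume ({φ : ℝ | Real.cos φ ∈ Set.Icc x₁ x₂} ∩ Set.Icc 0 (2*π)) =
      ENNReal.ofReal (2 * (Real.arccos x₁ - Real.arccos x₂))) :
    volume ({θ₂ : ℝ | Real.cos (θ₂ - θ₁) ∈ Set.Icc x₁ x₂} ∩ Set.Ico 0 (2*π)) =
      ENNReal.ofReal (2 * (Real.arccos x₁ - Real.arccos x₂)) := by
  have hpi := Real.pi_pos
  set U : Set ℝ := {φ : ℝ | Real.cos φ ∈ Set.Icc x₁ x₂} with hUdef
  have hU : MeasurableSet U := by
    apply measurableSet_preimage (by fun_prop) measurableSet_Icc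
  set S : Set ℝ := {θ₂ : ℝ | Real.cos (θ₂ - θ₁) ∈ Set.Icc x₁ x₂} with hSdef
  have hS : MeasurableSet S := by
    apply measurableSet_preimage (by fun_prop) measurableSet_Icc
  have hper : Function.Periodic (U.indicator (1 : ℝ → ℝ)) (2*π) := by
    intro x
    have hx : x + 2*π ∈ U ↔ x ∈ U := by
      simp only [hUdef, Set.mem_setOf_eq, Real.cos_add_two_pi]
    simp [Set.indicator_apply, hx]
  have hfin1 : volume (S ∩ Set.Ico 0 (2*π)) ≠ ⊤ :=
    ne_top_of_le_ne_top (by simp [Real.volume_Ico, ENNReal.mul_eq_top]) (measure_mono Set.inter_subset_right)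
  have hfin2 : volume (U ∩ Set.Icc 0 (2*π)) ≠ ⊤ :=
    ne_top_of_le_ne_top (by simp [Real.volume_Icc, ENNReal.mul_eq_top]) (measure_mono Set.inter_subset_right)
  have e1 := integral_indicator_one (μ := volume.restrict (Set.Ico 0 (2*π))) hS
  rw [measureReal_def, Measure.restrict_apply hS] at e1
  have e2 := integral_indicator_one (μ := volume.restrict (Set.Icc 0 (2*π))) hU
  rw [measureReal_def, Measure.restrict_apply hU] at e2
  have hto : (volume (S ∩ Set.Ico 0 (2*π))).toReal = (volume (U ∩ Set.Icc 0 (2*π))).toReal := by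
    rw [← e1, ← e2]
    rw [integral_Ico_eq_integral_Ioo, ← integral_Ioc_eq_integral_Ioo,
      integral_Icc_eq_integral_Ioc]
    rw [← intervalIntegral.integral_of_le (by linarith : (0:ℝ) ≤ 2*π),
      ← intervalIntegral.integral_of_le (by linarith : (0:ℝ) ≤ 2*π)]
    have hind : ∀ θ : ℝ, S.indicator (1 : ℝ → ℝ) θ = U.indicator (1 : ℝ → ℝ) (θ - θ₁) := by
      intro θ
      simp only [Set.indicator_apply, hSdef, hUdef, Set.mem_setOf_eq, Pi.one_apply]
    simp_rw [hind]
    rw [intervalIntegral.integral_comp_sub_right (U.indicator 1) θ₁]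
    have := hper.intervalIntegral_add_eq (0 - θ₁) 0
    rw [show (0:ℝ) - θ₁ + 2*π = 2*π - θ₁ by ring, show (0:ℝ) + 2*π = 2*π by ring] at this
    rw [show (0:ℝ) - θ₁ = -θ₁ by ring] at this ⊢
    exact this
  have := congrArg ENNReal.ofReal hto
  rwa [ENNReal.ofReal_toReal hfin1, ENNReal.ofReal_toReal hfin2, hval] at this






noncomputable def Hfun (r t₁ t₂ : ℝ) : ℝ :=
  if t₁ ≤ r ∧ t₂ ≤ r then (2/π) * min (Real.arccos (t₁/r)) (Real.arccos (t₂/r)) else 0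

lemma sinzero_countable (θ₁ : ℝ) : Set.Countable {θ₂ : ℝ | Real.sin (θ₂ - θ₁) = 0} := by
  have : {θ₂ : ℝ | Real.sin (θ₂ - θ₁) = 0} ⊆ Set.range (fun n : ℤ => (n : ℝ) * π + θ₁) := by
    intro θ hθ
    simp only [Set.mem_setOf_eq] at hθ
    obtain ⟨n, hn⟩ := Real.sin_eq_zero_iff.1 hθ
    refine ⟨n, ?_⟩
    show (n : ℝ) * π + θ₁ = θ
    linarith
  exact (Set.countable_range _).mono this

lemma unifCircle_null {A : Set ℝ} (h : volume A = 0) : unifCircle A = 0 := by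
  unfold unifCircle
  simp only [Measure.smul_apply, smul_eq_mul]
  have : volume.restrict (Set.Ico 0 (2*π)) A = 0 :=
    le_antisymm (le_trans (Measure.restrict_le_self A) h.le) (zero_le)
  rw [this, mul_zero]

lemma interDist_gt (r t₁ t₂ θ₁ θ₂ : ℝ) (hr0 : 0 ≤ r) (ht₁ : 0 ≤ t₁) (ht₂ : 0 ≤ t₂)
    (h : r < t₁ ∨ r < t₂) (hs : Real.sin (θ₂ - θ₁) ≠ 0) :
    r < interDist t₁ t₂ θ₁ θ₂ := by
  set c := Real.cos (θ₂ - θ₁)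
  set s := Real.sin (θ₂ - θ₁)
  have hpyth : s^2 + c^2 = 1 := Real.sin_sq_add_cos_sq _
  have hs2 : 0 < s^2 := by positivity
  have habs : 0 < |s| := abs_pos.2 hs
  set Q := t₁ ^ 2 + t₂ ^ 2 - 2 * t₁ * t₂ * c with hQ
  have hkey : r^2 * s^2 < Q := by
    rcases h with h | h
    · nlinarith [sq_nonneg (t₂ - t₁ * c), sq_nonneg s, mul_pos (mul_pos (sub_pos.2 h) (by linarith : (0:ℝ) < t₁ + r)) hs2]
    · nlinarith [sq_nonneg (t₁ - t₂ * c), mul_pos (mul_pos (sub_pos.2 h) (by linarith : (0:ℝ) < t₂ + r)) hs2]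
  have hQpos : 0 < Q := lt_of_le_of_lt (by positivity) hkey
  unfold interDist
  rw [lt_div_iff₀ habs]
  by_contra hle
  push_neg at hle
  have h2 : Q ≤ (r * |s|)^2 := by
    calc Q = Real.sqrt Q ^ 2 := (Real.sq_sqrt hQpos.le).symm
    _ ≤ (r * |s|)^2 := by
        apply pow_le_pow_left₀ (Real.sqrt_nonneg _) hle
  have h3 : (r*|s|)^2 = r^2 * s^2 := by rw [mul_pow, sq_abs]
  rw [h3] at h2
  linarith

lemma unifCircle_inner_far (r t₁ t₂ θ₁ : ℝ) (hr0 : 0 ≤ r) (ht₁ : 0 ≤ t₁) (ht₂ : 0 ≤ t₂)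
    (hor : r < t₁ ∨ r < t₂) :
    unifCircle {θ₂ : ℝ | interDist t₁ t₂ θ₁ θ₂ ≤ r} = 0 := by
  have hNnull : volume {θ₂ : ℝ | Real.sin (θ₂ - θ₁) = 0} = 0 :=
    (sinzero_countable θ₁).measure_zero _
  have hsub : {θ₂ : ℝ | interDist t₁ t₂ θ₁ θ₂ ≤ r} ⊆ {θ₂ : ℝ | Real.sin (θ₂ - θ₁) = 0} := by
    intro θ₂ hθ
    simp only [Set.mem_setOf_eq] at hθ ⊢
    by_contra hns
    exact absurd hθ (not_le.2 (interDist_gt r t₁ t₂ θ₁ θ₂ hr0 ht₁ ht₂ hor hns))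
  exact le_antisymm (le_trans (measure_mono hsub) (unifCircle_null hNnull).le) (zero_le)

lemma unifCircle_inner (r t₁ t₂ θ₁ : ℝ) (hr : 0 < r) (ht₁ : 0 ≤ t₁) (ht₂ : 0 ≤ t₂)
    (hcos : ∀ x₁ x₂ : ℝ, -1 ≤ x₁ → x₁ ≤ x₂ → x₂ ≤ 1 →
      volume ({θ₂ : ℝ | Real.cos (θ₂ - θ₁) ∈ Set.Icc x₁ x₂} ∩ Set.Ico 0 (2*π)) =
        ENNReal.ofReal (2 * (Real.arccos x₁ - Real.arccos x₂))) :
    unifCircle {θ₂ : ℝ | interDist t₁ t₂ θ₁ θ₂ ≤ r} = ENNReal.ofReal (Hfun r t₁ t₂) := by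
  have hpi := Real.pi_pos
  have hNnull : volume {θ₂ : ℝ | Real.sin (θ₂ - θ₁) = 0} = 0 :=
    (sinzero_countable θ₁).measure_zero _
  by_cases hcase : t₁ ≤ r ∧ t₂ ≤ r
  · obtain ⟨h1r, h2r⟩ := hcase
    set α := Real.arccos (t₁/r) with hα
    set β := Real.arccos (t₂/r) with hβ
    have hd1 : t₁ / r ∈ Set.Icc (0:ℝ) 1 := ⟨by positivity, (div_le_one hr).2 h1r⟩
    have hd2 : t₂ / r ∈ Set.Icc (0:ℝ) 1 := ⟨by positivity, (div_le_one hr).2 h2r⟩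
    have hcα : Real.cos α = t₁ / r := Real.cos_arccos (by linarith [hd1.1]) hd1.2
    have hcβ : Real.cos β = t₂ / r := Real.cos_arccos (by linarith [hd2.1]) hd2.2
    have hsα : 0 ≤ Real.sin α := by rw [hα, Real.sin_arccos]; positivity
    have hsβ : 0 ≤ Real.sin β := by rw [hβ, Real.sin_arccos]; positivity
    have hα2 : α ≤ π/2 := Real.arccos_le_pi_div_two.2 hd1.1
    have hβ2 : β ≤ π/2 := Real.arccos_le_pi_div_two.2 hd2.1
    have hα0 : 0 ≤ α := Real.arccos_nonneg _
    have hβ0 : 0 ≤ β := Real.arccos_nonneg _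
    have ht1 : t₁ = r * Real.cos α := by rw [hcα]; field_simp
    have ht2 : t₂ = r * Real.cos β := by rw [hcβ]; field_simp
    set x₁ := Real.cos (α + β) with hx₁
    set x₂ := Real.cos (α - β) with hx₂
    have hx₂abs : x₂ = Real.cos |α - β| := by
      rcases abs_cases (α - β) with ⟨he, _⟩ | ⟨he, _⟩
      · rw [hx₂, he]
      · rw [hx₂, he, Real.cos_neg]
    have hx12 : x₁ ≤ x₂ := by
      rw [hx₂abs, hx₁]
      apply Real.cos_le_cos_of_nonneg_of_le_pi (abs_nonneg _) (by linarith)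
      rcases abs_cases (α - β) with ⟨he, _⟩ | ⟨he, _⟩ <;> linarith [he]
    have key : ∀ θ₂ : ℝ, Real.sin (θ₂ - θ₁) ≠ 0 →
        (interDist t₁ t₂ θ₁ θ₂ ≤ r ↔ Real.cos (θ₂ - θ₁) ∈ Set.Icc x₁ x₂) := by
      intro θ₂ hs
      set c := Real.cos (θ₂ - θ₁)
      set s := Real.sin (θ₂ - θ₁)
      set A := Real.cos α
      set B := Real.cos β
      set SA := Real.sin α
      set SB := Real.sin β
      have hpyth : s^2 + c^2 = 1 := Real.sin_sq_add_cos_sq _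
      have habs : 0 < |s| := abs_pos.2 hs
      have hsq : |s|^2 = s^2 := sq_abs s
      have h4 : r^2*(s^2 + c^2) = r^2*1 := by rw [hpyth]
      have h6 : r^2*(SA^2*SB^2) = r^2*((1-A^2)*(1-B^2)) := by
        have e1 : SA^2 = 1 - A^2 := by
          have := Real.sin_sq_add_cos_sq α; linarith
        have e2 : SB^2 = 1 - B^2 := by
          have := Real.sin_sq_add_cos_sq β; linarith
        rw [e1, e2]
      unfold interDist
      rw [div_le_iff₀ habs, Real.sqrt_le_iff]
      rw [ht1, ht2]
      have hQiff : ((r*A) ^ 2 + (r*B) ^ 2 - 2 * (r*A) * (r*B) * c ≤ (r * |s|)^2) ↔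
          c ∈ Set.Icc x₁ x₂ := by
        rw [mul_pow r |s|, hsq, hx₁, hx₂, Real.cos_add, Real.cos_sub]
        constructor
        · intro hQ
          have h3' : r^2*((c - A*B)^2) ≤ r^2*((SA*SB)^2) := by nlinarith [hQ, h4, h6]
          have h3 : (c - A*B)^2 ≤ (SA*SB)^2 :=
            (mul_le_mul_iff_right₀ (by positivity : (0:ℝ) < r^2)).mp h3'
          constructor
          · nlinarith [h3, mul_nonneg hsα hsβ]
          · nlinarith [h3, mul_nonneg hsα hsβ]
        · rintro ⟨hl, hu⟩
          have h7 : 0 ≤ r^2 * ((c - (A*B - SA*SB)) * ((A*B + SA*SB) - c)) :=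
            mul_nonneg (sq_nonneg r) (mul_nonneg (by linarith) (by linarith))
          nlinarith [h7, h4, h6]
      rw [hQiff]
      have hrs : 0 ≤ r * |s| := by positivity
      simp only [Set.mem_Icc]
      tauto
    have hmeasS : MeasurableSet {θ₂ : ℝ | Real.cos (θ₂ - θ₁) ∈ Set.Icc x₁ x₂} :=
      measurableSet_preimage (by fun_prop) measurableSet_Icc
    have hae : {θ₂ : ℝ | interDist t₁ t₂ θ₁ θ₂ ≤ r}
        =ᵐ[unifCircle] {θ₂ : ℝ | Real.cos (θ₂ - θ₁) ∈ Set.Icc x₁ x₂} := by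
      have hsub : {θ₂ : ℝ | interDist t₁ t₂ θ₁ θ₂ ≤ r} ∆ {θ₂ : ℝ | Real.cos (θ₂ - θ₁) ∈ Set.Icc x₁ x₂}
          ⊆ {θ₂ : ℝ | Real.sin (θ₂ - θ₁) = 0} := by
        intro θ₂ hθ
        by_contra hns
        simp only [Set.mem_setOf_eq] at hns
        have hiff := key θ₂ hns
        rcases hθ with ⟨ha, hb⟩ | ⟨ha, hb⟩ <;> simp only [Set.mem_setOf_eq] at ha hb <;> tauto
      have h0 : unifCircle ({θ₂ : ℝ | interDist t₁ t₂ θ₁ θ₂ ≤ r} ∆ {θ₂ : ℝ | Real.cos (θ₂ - θ₁) ∈ Set.Icc x₁ x₂}) = 0 :=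
        le_antisymm (le_trans (measure_mono hsub) (unifCircle_null hNnull).le) (zero_le)
      exact MeasureTheory.measure_symmDiff_eq_zero_iff.mp h0
    rw [measure_congr hae]
    have hx1b : -1 ≤ x₁ := Real.neg_one_le_cos _
    have hx2b : x₂ ≤ 1 := Real.cos_le_one _
    have harc1 : Real.arccos x₁ = α + β := by
      rw [hx₁]; exact Real.arccos_cos (by linarith) (by linarith)
    have harc2 : Real.arccos x₂ = |α - β| := by
      rw [hx₂abs]
      exact Real.arccos_cos (abs_nonneg _) (by rcases abs_cases (α - β) with ⟨he,_⟩|⟨he,_⟩ <;> linarith)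
    have happ : unifCircle {θ₂ : ℝ | Real.cos (θ₂ - θ₁) ∈ Set.Icc x₁ x₂}
        = (ENNReal.ofReal (2 * π))⁻¹ *
          volume ({θ₂ : ℝ | Real.cos (θ₂ - θ₁) ∈ Set.Icc x₁ x₂} ∩ Set.Ico 0 (2*π)) := by
      unfold unifCircle
      rw [Measure.smul_apply, smul_eq_mul, Measure.restrict_apply hmeasS]
    rw [happ, hcos x₁ x₂ hx1b hx12 hx2b, harc1, harc2]
    have hmin : 2 * (α + β - |α - β|) = 4 * min α β := by
      rcases le_total α β with h | h
      · rw [abs_of_nonpos (by linarith), min_eq_left h]; ring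
      · rw [abs_of_nonneg (by linarith), min_eq_right h]; ring
    rw [hmin]
    have hH : Hfun r t₁ t₂ = (2/π) * min α β := by
      rw [Hfun, if_pos ⟨h1r, h2r⟩]
    rw [hH]
    rw [show (2:ℝ)/π * min α β = (4 * min α β) / (2*π) by field_simp; ring]
    rw [ENNReal.ofReal_div_of_pos (by linarith), ENNReal.div_eq_inv_mul]
  · push_neg at hcase
    have hsub : {θ₂ : ℝ | interDist t₁ t₂ θ₁ θ₂ ≤ r} ⊆ {θ₂ : ℝ | Real.sin (θ₂ - θ₁) = 0} := by
      intro θ₂ hθ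
      simp only [Set.mem_setOf_eq] at hθ ⊢
      by_contra hns
      have hor : r < t₁ ∨ r < t₂ := by
        rcases le_or_gt t₁ r with h | h
        · exact Or.inr (hcase h)
        · exact Or.inl h
      exact absurd hθ (not_le.2 (interDist_gt r t₁ t₂ θ₁ θ₂ hr.le ht₁ ht₂ hor hns))
    have h0 : unifCircle {θ₂ : ℝ | interDist t₁ t₂ θ₁ θ₂ ≤ r} = 0 :=
      le_antisymm (le_trans (measure_mono hsub) (unifCircle_null hNnull).le) (zero_le)
    rw [h0, Hfun, if_neg]
    · simp
    · rintro ⟨h1, h2⟩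
      rcases le_or_gt t₁ r with h | h
      · exact absurd h2 (not_le.2 (hcase h))
      · exact absurd h1 (not_le.2 h)





instance : IsProbabilityMeasure unifCircle := by
  constructor
  unfold unifCircle
  have hpi := Real.pi_pos
  rw [Measure.smul_apply, smul_eq_mul, Measure.restrict_apply MeasurableSet.univ,
    Set.univ_inter, Real.volume_Ico, sub_zero]
  exact ENNReal.inv_mul_cancel (by simp [ENNReal.ofReal_pos]; linarith) ENNReal.ofReal_ne_top

instance : IsProbabilityMeasure unifMidpoint := by
  constructor
  unfold unifMidpoint
  rw [withDensity_apply _ MeasurableSet.univ, Measure.restrict_univ]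
  have hint : Integrable (fun t : ℝ => 2 * t) (volume.restrict (Set.Icc (0:ℝ) 1)) :=
    (continuous_const.mul continuous_id).integrableOn_Icc
  have hnn : 0 ≤ᶠ[ae (volume.restrict (Set.Icc (0:ℝ) 1))] fun t : ℝ => 2 * t := by
    filter_upwards [ae_restrict_mem measurableSet_Icc] with t ht
    simp only [Pi.zero_apply]
    linarith [ht.1]
  rw [← MeasureTheory.ofReal_integral_eq_lintegral_ofReal hint hnn]
  have : ∫ t in Set.Icc (0:ℝ) 1, 2 * t = 1 := by
    rw [integral_Icc_eq_integral_Ioc, ← intervalIntegral.integral_of_le zero_le_one]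
    rw [intervalIntegral.integral_const_mul, integral_id]
    norm_num
  rw [this, ENNReal.ofReal_one]


lemma pair_measure (r t₁ t₂ : ℝ) (hr : 0 < r) (ht₁ : 0 ≤ t₁) (ht₂ : 0 ≤ t₂) :
    (unifCircle.prod unifCircle) {p : ℝ × ℝ | interDist t₁ t₂ p.1 p.2 ≤ r} =
      ENNReal.ofReal (Hfun r t₁ t₂) := by
  have hmeas : MeasurableSet {p : ℝ × ℝ | interDist t₁ t₂ p.1 p.2 ≤ r} :=
    measurableSet_le (measurable_interDist2 t₁ t₂) measurable_const
  rw [Measure.prod_apply hmeas]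
  have heq : ∀ θ₁ : ℝ, unifCircle (Prod.mk θ₁ ⁻¹' {p : ℝ × ℝ | interDist t₁ t₂ p.1 p.2 ≤ r}) =
      ENNReal.ofReal (Hfun r t₁ t₂) := by
    intro θ₁
    have : Prod.mk θ₁ ⁻¹' {p : ℝ × ℝ | interDist t₁ t₂ p.1 p.2 ≤ r} =
        {θ₂ : ℝ | interDist t₁ t₂ θ₁ θ₂ ≤ r} := rfl
    rw [this, unifCircle_inner r t₁ t₂ θ₁ hr ht₁ ht₂ (fun x₁ x₂ a b c => volume_cos_window x₁ x₂ θ₁ a b c (volume_cos_set x₁ x₂ a b c))]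
  simp_rw [heq]
  rw [lintegral_const, measure_univ, mul_one]

lemma pair_measure_far (r t₁ t₂ : ℝ) (hr0 : 0 ≤ r) (ht₁ : 0 ≤ t₁) (ht₂ : 0 ≤ t₂)
    (hor : r < t₁ ∨ r < t₂) :
    (unifCircle.prod unifCircle) {p : ℝ × ℝ | interDist t₁ t₂ p.1 p.2 ≤ r} = 0 := by
  have hmeas : MeasurableSet {p : ℝ × ℝ | interDist t₁ t₂ p.1 p.2 ≤ r} :=
    measurableSet_le (measurable_interDist2 t₁ t₂) measurable_const
  rw [Measure.prod_apply hmeas]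
  have heq : ∀ θ₁ : ℝ, unifCircle (Prod.mk θ₁ ⁻¹' {p : ℝ × ℝ | interDist t₁ t₂ p.1 p.2 ≤ r}) = 0 :=
    fun θ₁ => unifCircle_inner_far r t₁ t₂ θ₁ hr0 ht₁ ht₂ hor
  simp_rw [heq]
  rw [lintegral_const, zero_mul]


lemma sqrt_one_sub_div (r x : ℝ) (hr : 0 < r) (hrx2 : 0 ≤ r^2 - x^2) :
    Real.sqrt (1 - (x/r)^2) = Real.sqrt (r^2 - x^2) / r := by
  rw [show 1 - (x/r)^2 = (r^2 - x^2)/r^2 by field_simp,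
    Real.sqrt_div hrx2 (r^2), Real.sqrt_sq hr.le]

lemma ftc_mid (r a b : ℝ) (hr : 0 < r) (ha : 0 ≤ a) (hab : a ≤ b) (hbr : b ≤ r) :
    ∫ t in a..b, 2 * t * Real.arccos (t/r) =
      (b^2 * Real.arccos (b/r) + r^2/2 * Real.arcsin (b/r) - b/2 * Real.sqrt (r^2 - b^2)) -
      (a^2 * Real.arccos (a/r) + r^2/2 * Real.arcsin (a/r) - a/2 * Real.sqrt (r^2 - a^2)) := by
  set A : ℝ → ℝ := fun t =>
    t^2 * Real.arccos (t/r) + r^2/2 * Real.arcsin (t/r) - t/2 * Real.sqrt (r^2 - t^2) with hA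
  have c1 : Continuous fun t : ℝ => Real.arccos (t/r) :=
    Real.continuous_arccos.comp (continuous_id.div_const r)
  have c2 : Continuous fun t : ℝ => Real.arcsin (t/r) :=
    Real.continuous_arcsin.comp (continuous_id.div_const r)
  have c3 : Continuous fun t : ℝ => Real.sqrt (r^2 - t^2) :=
    Real.continuous_sqrt.comp (by fun_prop)
  have hcont : ContinuousOn A (Set.Icc a b) := by
    apply Continuous.continuousOn
    exact (((continuous_pow 2).mul c1).add (continuous_const.mul c2)).sub
      ((continuous_id.div_const 2).mul c3)
  have hderiv : ∀ x ∈ Set.Ioo a b, HasDerivWithinAt A (2 * x * Real.arccos (x/r)) (Set.Ioi x) x := by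
    intro x hx
    have hx0 : 0 ≤ x := le_trans ha hx.1.le
    have hxr : x < r := lt_of_lt_of_le hx.2 hbr
    have hrx2 : 0 < r^2 - x^2 := by nlinarith
    have hxr1 : x / r < 1 := (div_lt_one hr).2 hxr
    have hxrm : (-1:ℝ) < x / r := by
      have : (0:ℝ) ≤ x / r := by positivity
      linarith
    have hdiv : HasDerivAt (fun t : ℝ => t / r) (1/r) x := by
      simpa using (hasDerivAt_id x).div_const r
    have harccos : HasDerivAt (fun t : ℝ => Real.arccos (t/r))
        (-(1 / Real.sqrt (1 - (x/r)^2)) * (1/r)) x :=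
      (Real.hasDerivAt_arccos (ne_of_gt hxrm) (ne_of_lt hxr1)).comp (h₂ := Real.arccos) (h := fun t => t / r) x hdiv
    have harcsin : HasDerivAt (fun t : ℝ => Real.arcsin (t/r))
        (1 / Real.sqrt (1 - (x/r)^2) * (1/r)) x :=
      (Real.hasDerivAt_arcsin (ne_of_gt hxrm) (ne_of_lt hxr1)).comp (h₂ := Real.arcsin) (h := fun t => t / r) x hdiv
    have hinner : HasDerivAt (fun t : ℝ => r^2 - t^2) (-(2*x)) x := by
      simpa using (hasDerivAt_pow 2 x).const_sub (r^2)
    have hsq : HasDerivAt (fun t : ℝ => Real.sqrt (r^2 - t^2))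
        (1/(2*Real.sqrt (r^2 - x^2)) * (-(2*x))) x :=
      (Real.hasDerivAt_sqrt (ne_of_gt hrx2)).comp x hinner
    have h1 := (hasDerivAt_pow 2 x).mul harccos
    have h2 := harcsin.const_mul (r^2/2)
    have h3 := ((hasDerivAt_id x).div_const 2).mul hsq
    have htot := (h1.add h2).sub h3
    apply HasDerivAt.hasDerivWithinAt
    convert htot using 1
    · rfl
    have hs := sqrt_one_sub_div r x hr hrx2.le
    set u := Real.sqrt (r^2 - x^2) with hu
    have hu2 : u^2 = r^2 - x^2 := Real.sq_sqrt hrx2.le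
    have hupos : 0 < u := Real.sqrt_pos.2 hrx2
    rw [hs]
    field_simp
    simp only [id]
    linear_combination hu2
  have hint : IntervalIntegrable (fun t : ℝ => 2 * t * Real.arccos (t/r)) volume a b := by
    exact ((continuous_const.mul continuous_id).mul c1).intervalIntegrable _ _
  rw [intervalIntegral.integral_eq_sub_of_hasDeriv_right_of_le hab hcont hderiv hint]


lemma ftc_outer (r : ℝ) (hr : 0 < r) :
    ∫ t in (0:ℝ)..r,
      2 * t * ((2/π) * (π*r^2/4 - r^2/2 * Real.arcsin (t/r) + t/2 * Real.sqrt (r^2 - t^2)))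
      = 3 * r^4 / 8 := by
  have hpi := Real.pi_pos
  set F : ℝ → ℝ := fun t =>
    (2/π) * (π*r^2/4*t^2 - r^2*((t^2/2 - r^2/4) * Real.arcsin (t/r) + t/4 * Real.sqrt (r^2 - t^2))
      + (r^4/8 * Real.arcsin (t/r) + (2*t^3 - r^2*t)/8 * Real.sqrt (r^2 - t^2))) with hF
  have c2 : Continuous fun t : ℝ => Real.arcsin (t/r) :=
    Real.continuous_arcsin.comp (continuous_id.div_const r)
  have c3 : Continuous fun t : ℝ => Real.sqrt (r^2 - t^2) :=
    Real.continuous_sqrt.comp (by fun_prop)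
  have hcont : ContinuousOn F (Set.Icc 0 r) := by
    apply Continuous.continuousOn
    apply Continuous.mul continuous_const
    apply Continuous.add
    · apply Continuous.sub (by fun_prop)
      apply Continuous.mul continuous_const
      exact (Continuous.mul (by fun_prop) c2).add ((by fun_prop : Continuous fun t : ℝ => t/4).mul c3)
    · exact (continuous_const.mul c2).add ((by fun_prop : Continuous fun t : ℝ => (2*t^3 - r^2*t)/8).mul c3)
  have hderiv : ∀ x ∈ Set.Ioo 0 r, HasDerivWithinAt F
      (2 * x * ((2/π) * (π*r^2/4 - r^2/2 * Real.arcsin (x/r) + x/2 * Real.sqrt (r^2 - x^2))))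
      (Set.Ioi x) x := by
    intro x hx
    have hx0 : 0 < x := hx.1
    have hxr : x < r := hx.2
    have hrx2 : 0 < r^2 - x^2 := by nlinarith
    have hxr1 : x / r < 1 := (div_lt_one hr).2 hxr
    have hxrm : (-1:ℝ) < x / r := by
      have : (0:ℝ) ≤ x / r := by positivity
      linarith
    have hdiv : HasDerivAt (fun t : ℝ => t / r) (1/r) x := by
      simpa using (hasDerivAt_id x).div_const r
    have harcsin : HasDerivAt (fun t : ℝ => Real.arcsin (t/r))
        (1 / Real.sqrt (1 - (x/r)^2) * (1/r)) x :=
      (Real.hasDerivAt_arcsin (ne_of_gt hxrm) (ne_of_lt hxr1)).comp (h₂ := Real.arcsin) (h := fun t => t / r) x hdiv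
    have hinner : HasDerivAt (fun t : ℝ => r^2 - t^2) (-(2*x)) x := by
      simpa using (hasDerivAt_pow 2 x).const_sub (r^2)
    have hsq : HasDerivAt (fun t : ℝ => Real.sqrt (r^2 - t^2))
        (1/(2*Real.sqrt (r^2 - x^2)) * (-(2*x))) x :=
      (Real.hasDerivAt_sqrt (ne_of_gt hrx2)).comp x hinner
    have ht1 : HasDerivAt (fun t : ℝ => π*r^2/4*t^2) (π*r^2/4*(2*x^1)) x :=
      (hasDerivAt_pow 2 x).const_mul (π*r^2/4)
    have hP1 := (((hasDerivAt_pow 2 x).div_const 2).sub_const (r^2/4)).mul harcsin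
    have hP2 := ((hasDerivAt_id x).div_const 4).mul hsq
    have hD1 := harcsin.const_mul (r^4/8)
    have hD2 := ((((hasDerivAt_pow 3 x).const_mul 2).sub ((hasDerivAt_id x).const_mul (r^2))).div_const 8).mul hsq
    have htot := (((ht1.sub ((hP1.add hP2).const_mul (r^2))).add (hD1.add hD2)).const_mul (2/π))
    apply HasDerivAt.hasDerivWithinAt
    convert htot using 1
    rotate_right
    have hs := sqrt_one_sub_div r x hr hrx2.le
    set u := Real.sqrt (r^2 - x^2) with hu
    have hu2 : u^2 = r^2 - x^2 := Real.sq_sqrt hrx2.le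
    have hupos : 0 < u := Real.sqrt_pos.2 hrx2
    rw [hs]
    field_simp
    ring_nf
    simp only [id, Pi.sub_apply]
    linear_combination (16*x^2 + 24*r^2) * hu2
    all_goals rfl
  have hint : IntervalIntegrable (fun t : ℝ =>
      2 * t * ((2/π) * (π*r^2/4 - r^2/2 * Real.arcsin (t/r) + t/2 * Real.sqrt (r^2 - t^2)))) volume 0 r := by
    apply Continuous.intervalIntegrable
    apply Continuous.mul (by fun_prop)
    apply Continuous.mul continuous_const
    exact (Continuous.sub (by fun_prop) (continuous_const.mul c2)).add ((by fun_prop : Continuous fun t:ℝ => t/2).mul c3)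
  rw [intervalIntegral.integral_eq_sub_of_hasDeriv_right_of_le hr.le hcont hderiv hint]
  rw [hF]
  simp only [Real.arcsin_zero, Real.arcsin_one, div_self hr.ne']
  rw [sub_self, Real.sqrt_zero]
  simp [Real.arcsin_zero, Real.sqrt_sq hr.le]
  field_simp
  ring


noncomputable def Gfun (r t₁ : ℝ) : ℝ :=
  if t₁ ≤ r then (2/π) * (π*r^2/4 - r^2/2 * Real.arcsin (t₁/r) + t₁/2 * Real.sqrt (r^2 - t₁^2))
  else 0


lemma arccos_antitone : Antitone Real.arccos := by
  intro x y h
  simp only [Real.arccos]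
  have := Real.monotone_arcsin h
  linarith


lemma integral_Hfun (r t₁ : ℝ) (hr : 0 < r) (hr1 : r ≤ 1) (ht₁ : t₁ ∈ Set.Icc (0:ℝ) 1) :
    ∫ t₂ in Set.Icc (0:ℝ) 1, 2 * t₂ * Hfun r t₁ t₂ = Gfun r t₁ := by
  have hpi := Real.pi_pos
  have h0 : (0:ℝ) ≤ t₁ := ht₁.1
  by_cases hc : t₁ ≤ r
  · set f : ℝ → ℝ := fun t₂ => 2 * t₂ * Hfun r t₁ t₂ with hf
    have c1 : Continuous fun t : ℝ => Real.arccos (t/r) :=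
      Real.continuous_arccos.comp (continuous_id.div_const r)
    -- piece descriptions
    have hf1 : Set.EqOn f (fun t₂ => (2/π)*Real.arccos (t₁/r)*(2*t₂)) (Set.Icc 0 t₁) := by
      intro t₂ ht
      have h2r : t₂ ≤ r := le_trans ht.2 hc
      have hmin : min (Real.arccos (t₁/r)) (Real.arccos (t₂/r)) = Real.arccos (t₁/r) := by
        apply min_eq_left
        apply arccos_antitone
        gcongr
        exact ht.2
      simp only [hf, Hfun, hmin]
      rw [if_pos (⟨hc, h2r⟩ : t₁ ≤ r ∧ t₂ ≤ r)]
      ring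
    have hf2 : Set.EqOn f (fun t₂ => (2/π)*(2*t₂*Real.arccos (t₂/r))) (Set.Icc t₁ r) := by
      intro t₂ ht
      have hmin : min (Real.arccos (t₁/r)) (Real.arccos (t₂/r)) = Real.arccos (t₂/r) := by
        apply min_eq_right
        apply arccos_antitone
        gcongr
        exact ht.1
      simp only [hf, Hfun, hmin]
      rw [if_pos (⟨hc, ht.2⟩ : t₁ ≤ r ∧ t₂ ≤ r)]
      ring
    have hf3 : Set.EqOn f (fun _ => (0:ℝ)) (Set.Ioc r 1) := by
      intro t₂ ht
      simp only [hf, Hfun]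
      rw [if_neg (show ¬(t₁ ≤ r ∧ t₂ ≤ r) from fun h => absurd h.2 (not_le.2 ht.1))]
      ring
    -- integrability
    have hint1 : IntervalIntegrable f volume 0 t₁ := by
      rw [intervalIntegrable_iff_integrableOn_Ioc_of_le h0]
      exact (((continuous_const.mul (continuous_const.mul continuous_id)).integrableOn_Ioc)).congr_fun
        ((hf1.mono Set.Ioc_subset_Icc_self).symm) measurableSet_Ioc
    have hint2 : IntervalIntegrable f volume t₁ r := by
      rw [intervalIntegrable_iff_integrableOn_Ioc_of_le hc]
      exact ((continuous_const.mul ((continuous_const.mul continuous_id).mul c1)).integrableOn_Ioc).congr_fun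
        ((hf2.mono Set.Ioc_subset_Icc_self).symm) measurableSet_Ioc
    have hint3 : IntervalIntegrable f volume r 1 := by
      rw [intervalIntegrable_iff_integrableOn_Ioc_of_le hr1]
      exact (integrableOn_zero.congr_fun hf3.symm measurableSet_Ioc)
    -- compute pieces
    have hp1 : ∫ t₂ in (0:ℝ)..t₁, f t₂ = (2/π)*Real.arccos (t₁/r)*t₁^2 := by
      rw [intervalIntegral.integral_congr (by rwa [Set.uIcc_of_le h0])]
      rw [intervalIntegral.integral_const_mul]
      have : ∫ t in (0:ℝ)..t₁, 2*t = t₁^2 := by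
        rw [intervalIntegral.integral_const_mul, integral_id]
        ring
      rw [this]
    have hp2 : ∫ t₂ in t₁..r, f t₂ =
        (2/π) * ((r^2/2 * (π/2)) - (t₁^2 * Real.arccos (t₁/r) + r^2/2 * Real.arcsin (t₁/r) - t₁/2 * Real.sqrt (r^2 - t₁^2))) := by
      rw [intervalIntegral.integral_congr (by rwa [Set.uIcc_of_le hc])]
      rw [intervalIntegral.integral_const_mul, ftc_mid r t₁ r hr h0 hc le_rfl]
      rw [div_self hr.ne', Real.arccos_one, Real.arcsin_one, sub_self, Real.sqrt_zero]
      ring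
    have hp3 : ∫ t₂ in r..(1:ℝ), f t₂ = 0 := by
      rw [intervalIntegral.integral_of_le hr1]
      rw [MeasureTheory.setIntegral_congr_fun measurableSet_Ioc hf3]
      simp
    have : ∫ t₂ in Set.Icc (0:ℝ) 1, f t₂ = ∫ t₂ in (0:ℝ)..1, f t₂ := by
      rw [integral_Icc_eq_integral_Ioc, ← intervalIntegral.integral_of_le zero_le_one]
    rw [this]
    rw [← intervalIntegral.integral_add_adjacent_intervals (hint1.trans hint2) hint3,
      ← intervalIntegral.integral_add_adjacent_intervals hint1 hint2, hp1, hp2, hp3]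
    rw [Gfun, if_pos hc]
    ring
  · have hzero : ∀ t₂ : ℝ, Hfun r t₁ t₂ = 0 := fun t₂ => if_neg (fun h => hc h.1)
    simp only [hzero, mul_zero, integral_zero, Gfun, if_neg hc]

lemma integral_Gfun (r : ℝ) (hr : 0 < r) (hr1 : r ≤ 1) :
    ∫ t₁ in Set.Icc (0:ℝ) 1, 2 * t₁ * Gfun r t₁ = 3 * r^4 / 8 := by
  have hpi := Real.pi_pos
  set f : ℝ → ℝ := fun t₁ => 2 * t₁ * Gfun r t₁ with hf
  have c2 : Continuous fun t : ℝ => Real.arcsin (t/r) :=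
    Real.continuous_arcsin.comp (continuous_id.div_const r)
  have c3 : Continuous fun t : ℝ => Real.sqrt (r^2 - t^2) :=
    Real.continuous_sqrt.comp (by fun_prop)
  have cg : Continuous fun t : ℝ =>
      2 * t * ((2/π) * (π*r^2/4 - r^2/2 * Real.arcsin (t/r) + t/2 * Real.sqrt (r^2 - t^2))) := by
    apply Continuous.mul (by fun_prop)
    apply Continuous.mul continuous_const
    exact (Continuous.sub (by fun_prop) (continuous_const.mul c2)).add
      ((by fun_prop : Continuous fun t:ℝ => t/2).mul c3)
  have hf1 : Set.EqOn f (fun t : ℝ =>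
      2 * t * ((2/π) * (π*r^2/4 - r^2/2 * Real.arcsin (t/r) + t/2 * Real.sqrt (r^2 - t^2))))
      (Set.Icc 0 r) := by
    intro t ht
    simp only [hf, Gfun, if_pos ht.2]
  have hf3 : Set.EqOn f (fun _ => (0:ℝ)) (Set.Ioc r 1) := by
    intro t ht
    simp only [hf, Gfun, if_neg (not_le.2 ht.1)]
    ring
  have hint1 : IntervalIntegrable f volume 0 r := by
    rw [intervalIntegrable_iff_integrableOn_Ioc_of_le hr.le]
    exact (cg.integrableOn_Ioc).congr_fun ((hf1.mono Set.Ioc_subset_Icc_self).symm) measurableSet_Ioc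
  have hint3 : IntervalIntegrable f volume r 1 := by
    rw [intervalIntegrable_iff_integrableOn_Ioc_of_le hr1]
    exact integrableOn_zero.congr_fun hf3.symm measurableSet_Ioc
  have hp1 : ∫ t in (0:ℝ)..r, f t = 3 * r^4 / 8 := by
    rw [intervalIntegral.integral_congr (by rwa [Set.uIcc_of_le hr.le])]
    exact ftc_outer r hr
  have hp3 : ∫ t in r..(1:ℝ), f t = 0 := by
    rw [intervalIntegral.integral_of_le hr1]
    rw [MeasureTheory.setIntegral_congr_fun measurableSet_Ioc hf3]
    simp
  have : ∫ t in Set.Icc (0:ℝ) 1, f t = ∫ t in (0:ℝ)..1, f t := by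
    rw [integral_Icc_eq_integral_Ioc, ← intervalIntegral.integral_of_le zero_le_one]
  rw [this, ← intervalIntegral.integral_add_adjacent_intervals hint1 hint3, hp1, hp3, add_zero]


-- basic bounds
lemma Hfun_nonneg (r t₁ t₂ : ℝ) : 0 ≤ Hfun r t₁ t₂ := by
  unfold Hfun
  split
  · have h1 := Real.arccos_nonneg (t₁/r)
    have h2 := Real.arccos_nonneg (t₂/r)
    have hp := Real.pi_pos
    apply mul_nonneg (by positivity)
    exact le_min h1 h2
  · exact le_refl 0

lemma measurable_Hfun (r t₁ : ℝ) : Measurable fun t₂ : ℝ => Hfun r t₁ t₂ := by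
  unfold Hfun
  apply Measurable.ite
  · have : {t₂ : ℝ | t₁ ≤ r ∧ t₂ ≤ r} = {t₂ : ℝ | t₁ ≤ r} ∩ Set.Iic r := by
      ext t₂; simp [Set.mem_setOf_eq, Set.mem_Iic]
    rw [this]
    exact (MeasurableSet.const _).inter measurableSet_Iic
  · apply Measurable.const_mul
    exact Measurable.min measurable_const
      (Real.continuous_arccos.measurable.comp (measurable_id.div_const r))
  · exact measurable_const

lemma measurable_Gfun (r : ℝ) : Measurable fun t₁ : ℝ => Gfun r t₁ := by
  unfold Gfun
  apply Measurable.ite measurableSet_Iic _ measurable_const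
  apply Continuous.measurable
  apply Continuous.mul continuous_const
  exact (Continuous.sub (by fun_prop)
      (continuous_const.mul (Real.continuous_arcsin.comp (continuous_id.div_const r)))).add
    ((by fun_prop : Continuous fun t:ℝ => t/2).mul
      (Real.continuous_sqrt.comp (by fun_prop)))

lemma Hfun_le_one (r t₁ t₂ : ℝ) (ht₂ : 0 ≤ t₂) : Hfun r t₁ t₂ ≤ 1 := by
  unfold Hfun
  have hp := Real.pi_pos
  split
  · next h =>
    have hr : 0 ≤ r := le_trans ht₂ h.2
    have h2 : Real.arccos (t₂/r) ≤ π/2 := Real.arccos_le_pi_div_two.2 (div_nonneg ht₂ hr)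
    calc 2/π * min (Real.arccos (t₁/r)) (Real.arccos (t₂/r)) ≤ 2/π * (π/2) := by
          apply mul_le_mul_of_nonneg_left (le_trans (min_le_right _ _) h2) (by positivity)
      _ = 1 := by field_simp
  · norm_num

lemma lintegral_pair (r t₁ : ℝ) (hr : 0 < r) (hr1 : r ≤ 1) (ht₁ : t₁ ∈ Set.Icc (0:ℝ) 1) :
    ∫⁻ t₂, (unifCircle.prod unifCircle) {p : ℝ × ℝ | interDist t₁ t₂ p.1 p.2 ≤ r} ∂unifMidpoint
      = ENNReal.ofReal (Gfun r t₁) := by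
  have haemem : ∀ᵐ t₂ ∂unifMidpoint, t₂ ∈ Set.Icc (0:ℝ) 1 :=
    (ae_restrict_mem measurableSet_Icc).filter_mono (withDensity_absolutelyContinuous _ _).ae_le
  have step1 : ∫⁻ t₂, (unifCircle.prod unifCircle) {p : ℝ × ℝ | interDist t₁ t₂ p.1 p.2 ≤ r} ∂unifMidpoint
      = ∫⁻ t₂, ENNReal.ofReal (Hfun r t₁ t₂) ∂unifMidpoint := by
    apply lintegral_congr_ae
    filter_upwards [haemem] with t₂ ht₂
    exact pair_measure r t₁ t₂ hr ht₁.1 ht₂.1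
  rw [step1]
  unfold unifMidpoint
  rw [lintegral_withDensity_eq_lintegral_mul _
    (show Measurable fun t : ℝ => ENNReal.ofReal (2*t) from
      (measurable_const.mul measurable_id).ennreal_ofReal)
    ((measurable_Hfun r t₁).ennreal_ofReal)]
  have step2 : ∫⁻ t₂ in Set.Icc (0:ℝ) 1,
      ((fun t => ENNReal.ofReal (2*t)) * fun t₂ => ENNReal.ofReal (Hfun r t₁ t₂)) t₂
      = ∫⁻ t₂ in Set.Icc (0:ℝ) 1, ENNReal.ofReal (2 * t₂ * Hfun r t₁ t₂) := by
    apply lintegral_congr_ae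
    filter_upwards [ae_restrict_mem measurableSet_Icc] with t₂ ht₂
    simp only [Pi.mul_apply]
    rw [← ENNReal.ofReal_mul (by linarith [ht₂.1])]
  rw [step2]
  have hInt : Integrable (fun t₂ => 2 * t₂ * Hfun r t₁ t₂) (volume.restrict (Set.Icc (0:ℝ) 1)) := by
    constructor
    · exact (((measurable_const.mul measurable_id).mul (measurable_Hfun r t₁))).aestronglyMeasurable
    · apply MeasureTheory.HasFiniteIntegral.of_bounded (C := 2)
      filter_upwards [ae_restrict_mem measurableSet_Icc] with t₂ ht₂
      rw [Real.norm_eq_abs, abs_of_nonneg (mul_nonneg (by linarith [ht₂.1]) (Hfun_nonneg r t₁ t₂))]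
      calc 2 * t₂ * Hfun r t₁ t₂ ≤ 2 * t₂ * 1 :=
            mul_le_mul_of_nonneg_left (Hfun_le_one r t₁ t₂ ht₂.1) (by linarith [ht₂.1])
        _ ≤ 2 := by linarith [ht₂.2]
  have hNN : 0 ≤ᶠ[ae (volume.restrict (Set.Icc (0:ℝ) 1))] fun t₂ => 2 * t₂ * Hfun r t₁ t₂ := by
    filter_upwards [ae_restrict_mem measurableSet_Icc] with t₂ ht₂
    exact mul_nonneg (by linarith [ht₂.1]) (Hfun_nonneg r t₁ t₂)
  rw [← MeasureTheory.ofReal_integral_eq_lintegral_ofReal hInt hNN,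
    integral_Hfun r t₁ hr hr1 ht₁]

lemma Gfun_nonneg (r t₁ : ℝ) (hr : 0 < r) (ht₁ : 0 ≤ t₁) : 0 ≤ Gfun r t₁ := by
  unfold Gfun
  have hp := Real.pi_pos
  split
  · apply mul_nonneg (by positivity)
    have h1 : Real.arcsin (t₁/r) ≤ π/2 := Real.arcsin_le_pi_div_two _
    have h2 : 0 ≤ t₁/2 * Real.sqrt (r^2 - t₁^2) := by positivity
    nlinarith [sq_nonneg r]
  · exact le_refl 0

lemma Gfun_le (r t₁ : ℝ) (hr : 0 < r) (hr1 : r ≤ 1) (ht₁ : 0 ≤ t₁) (ht₁' : t₁ ≤ 1) :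
    Gfun r t₁ ≤ 2 := by
  unfold Gfun
  have hp := Real.pi_pos
  split
  · next hc =>
    have h1 : 0 ≤ Real.arcsin (t₁/r) := Real.arcsin_nonneg.2 (by positivity)
    have h2 : Real.sqrt (r^2 - t₁^2) ≤ 1 := by
      rw [show (1:ℝ) = Real.sqrt 1 by simp]
      apply Real.sqrt_le_sqrt
      nlinarith
    have h3 : t₁/2 * Real.sqrt (r^2 - t₁^2) ≤ 1/2 := by
      calc t₁/2 * Real.sqrt (r^2 - t₁^2) ≤ 1/2 * 1 := by
            apply mul_le_mul (by linarith) h2 (Real.sqrt_nonneg _) (by norm_num)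
        _ = 1/2 := by norm_num
    have h4 : π*r^2/4 ≤ π/4 := by
      nlinarith [hp, hr.le, hr1, mul_nonneg (sub_nonneg.2 hr1) (by linarith : (0:ℝ) ≤ 1 + r)]
    rw [show (2:ℝ)/π * (π*r^2/4 - r^2/2 * Real.arcsin (t₁/r) + t₁/2 * Real.sqrt (r^2 - t₁^2))
      = (2*(π*r^2/4) - r^2 * Real.arcsin (t₁/r) + 2*(t₁/2 * Real.sqrt (r^2 - t₁^2)))/π by field_simp]
    rw [div_le_iff₀ hp]
    have h5 : 0 ≤ r^2 * Real.arcsin (t₁/r) := by positivity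
    nlinarith [Real.pi_gt_three]
  · norm_num

lemma lintegral_Gfun (r : ℝ) (hr : 0 < r) (hr1 : r ≤ 1) :
    ∫⁻ t₁, ENNReal.ofReal (Gfun r t₁) ∂unifMidpoint = ENNReal.ofReal (3 * r^4 / 8) := by
  unfold unifMidpoint
  rw [lintegral_withDensity_eq_lintegral_mul _
    (show Measurable fun t : ℝ => ENNReal.ofReal (2*t) from
      (measurable_const.mul measurable_id).ennreal_ofReal)
    ((measurable_Gfun r).ennreal_ofReal)]
  have step2 : ∫⁻ t₁ in Set.Icc (0:ℝ) 1,
      ((fun t => ENNReal.ofReal (2*t)) * fun t₁ => ENNReal.ofReal (Gfun r t₁)) t₁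
      = ∫⁻ t₁ in Set.Icc (0:ℝ) 1, ENNReal.ofReal (2 * t₁ * Gfun r t₁) := by
    apply lintegral_congr_ae
    filter_upwards [ae_restrict_mem measurableSet_Icc] with t₁ ht₁
    simp only [Pi.mul_apply]
    rw [← ENNReal.ofReal_mul (by linarith [ht₁.1])]
  rw [step2]
  have hInt : Integrable (fun t₁ => 2 * t₁ * Gfun r t₁) (volume.restrict (Set.Icc (0:ℝ) 1)) := by
    constructor
    · exact (((measurable_const.mul measurable_id).mul (measurable_Gfun r))).aestronglyMeasurable
    · apply MeasureTheory.HasFiniteIntegral.of_bounded (C := 4)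
      filter_upwards [ae_restrict_mem measurableSet_Icc] with t₁ ht₁
      rw [Real.norm_eq_abs, abs_of_nonneg (mul_nonneg (by linarith [ht₁.1]) (Gfun_nonneg r t₁ hr ht₁.1))]
      calc 2 * t₁ * Gfun r t₁ ≤ 2 * t₁ * 2 :=
            mul_le_mul_of_nonneg_left (Gfun_le r t₁ hr hr1 ht₁.1 ht₁.2) (by linarith [ht₁.1])
        _ ≤ 4 := by linarith [ht₁.2]
  have hNN : 0 ≤ᶠ[ae (volume.restrict (Set.Icc (0:ℝ) 1))] fun t₁ => 2 * t₁ * Gfun r t₁ := by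
    filter_upwards [ae_restrict_mem measurableSet_Icc] with t₁ ht₁
    exact mul_nonneg (by linarith [ht₁.1]) (Gfun_nonneg r t₁ hr ht₁.1)
  rw [← MeasureTheory.ofReal_integral_eq_lintegral_ofReal hInt hNN, integral_Gfun r hr hr1]

lemma unifMidpoint_ae_pos : ∀ᵐ t ∂unifMidpoint, 0 < t := by
  rw [MeasureTheory.ae_iff]
  have hset : {t : ℝ | ¬ 0 < t} = Set.Iic 0 := by
    ext t; simp [not_lt]
  rw [hset]
  unfold unifMidpoint
  rw [withDensity_apply _ measurableSet_Iic, Measure.restrict_restrict measurableSet_Iic]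
  have : Set.Iic (0:ℝ) ∩ Set.Icc 0 1 = {0} := by
    ext t
    simp only [Set.mem_inter_iff, Set.mem_Iic, Set.mem_Icc, Set.mem_singleton_iff]
    constructor
    · rintro ⟨h1, h2, _⟩; linarith
    · rintro rfl; norm_num
  rw [this, Measure.restrict_eq_zero.2 (by simp), lintegral_zero_measure]

theorem bertrand_uniform_midpoint_small (r : ℝ) (hr0 : 0 ≤ r) (hr1 : r ≤ 1) :
    (unifMidpoint.prod (unifMidpoint.prod (unifCircle.prod unifCircle)))
      {q : ℝ × ℝ × ℝ × ℝ | interDist q.1 q.2.1 q.2.2.1 q.2.2.2 ≤ r} =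
    ENNReal.ofReal (3 * r ^ 4 / 8) := by
  have hS : MeasurableSet {q : ℝ × ℝ × ℝ × ℝ | interDist q.1 q.2.1 q.2.2.1 q.2.2.2 ≤ r} :=
    measurableSet_le measurable_interDist measurable_const
  have haemem : ∀ᵐ t ∂unifMidpoint, t ∈ Set.Icc (0:ℝ) 1 :=
    (ae_restrict_mem measurableSet_Icc).filter_mono (withDensity_absolutelyContinuous _ _).ae_le
  rw [Measure.prod_apply hS]
  have hstep1 : ∀ t₁ : ℝ,
      (unifMidpoint.prod (unifCircle.prod unifCircle))
        (Prod.mk t₁ ⁻¹' {q : ℝ × ℝ × ℝ × ℝ | interDist q.1 q.2.1 q.2.2.1 q.2.2.2 ≤ r}) =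
      ∫⁻ t₂, (unifCircle.prod unifCircle) {p : ℝ × ℝ | interDist t₁ t₂ p.1 p.2 ≤ r} ∂unifMidpoint := by
    intro t₁
    rw [Measure.prod_apply (measurable_prodMk_left hS)]
    rfl
  rcases hr0.eq_or_lt with hz | hrpos
  · -- r = 0
    subst hz
    have hz2 : ENNReal.ofReal (3 * (0:ℝ) ^ 4 / 8) = 0 := by norm_num
    rw [hz2]
    have hae0 : ∀ᵐ t₁ ∂unifMidpoint,
        (unifMidpoint.prod (unifCircle.prod unifCircle))
          (Prod.mk t₁ ⁻¹' {q : ℝ × ℝ × ℝ × ℝ | interDist q.1 q.2.1 q.2.2.1 q.2.2.2 ≤ 0}) = 0 := by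
      filter_upwards [haemem, unifMidpoint_ae_pos] with t₁ ht₁ ht₁pos
      rw [hstep1 t₁]
      have : ∀ᵐ t₂ ∂unifMidpoint,
          (unifCircle.prod unifCircle) {p : ℝ × ℝ | interDist t₁ t₂ p.1 p.2 ≤ 0} = 0 := by
        filter_upwards [haemem] with t₂ ht₂
        exact pair_measure_far 0 t₁ t₂ le_rfl ht₁.1 ht₂.1 (Or.inl ht₁pos)
      rw [lintegral_congr_ae this, lintegral_zero]
    rw [lintegral_congr_ae hae0, lintegral_zero]
  · -- r > 0
    have hmain : ∀ᵐ t₁ ∂unifMidpoint,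
        (unifMidpoint.prod (unifCircle.prod unifCircle))
          (Prod.mk t₁ ⁻¹' {q : ℝ × ℝ × ℝ × ℝ | interDist q.1 q.2.1 q.2.2.1 q.2.2.2 ≤ r}) =
        ENNReal.ofReal (Gfun r t₁) := by
      filter_upwards [haemem] with t₁ ht₁
      rw [hstep1 t₁, lintegral_pair r t₁ hrpos hr1 ht₁]
    rw [lintegral_congr_ae hmain, lintegral_Gfun r hrpos hr1]
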